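/- With the same setup, define A(g)_β to be the set of u ∈ dom s such that s - g has a supporting hyperplane at u with normal vector [β,-1]. Then 𝓔(g)_β = ⋃_{u ∈ A(g)_β} 𝓔^u. -/

import Mathlib

open scoped RealInnerProductSpace

/-- The microcanonical entropy `s(u) = -inf{I(x) : H̃(x) = u}`. -/
noncomputable def microEntropy {σ : ℕ} {X : Type*} (I : X → EReal)
    (H : X → EuclideanSpace ℝ (Fin σ)) (u : EuclideanSpace ℝ (Fin σ)) : EReal :=
  -sInf (I '' {x | H x = u})

/-- The set `𝓔^u` of microcanonical equilibrium macrostates: minimizers of `I`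
subject to `H̃(x) = u`. -/
def microEquilibrium {σ : ℕ} {X : Type*} (I : X → EReal)
    (H : X → EuclideanSpace ℝ (Fin σ)) (u : EuclideanSpace ℝ (Fin σ)) : Set X :=
  {x | H x = u ∧ ∀ y, H y = u → I x ≤ I y}

/-- The set `𝓔(g)_β` of generalized canonical equilibrium macrostates: minimizers
of `I(x) + ⟨β, H̃(x)⟩ + g(H̃(x))`. -/
def genCanonEquilibrium {σ : ℕ} {X : Type*} (I : X → EReal)
    (H : X → EuclideanSpace ℝ (Fin σ)) (g : EuclideanSpace ℝ (Fin σ) → ℝ)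
    (β : EuclideanSpace ℝ (Fin σ)) : Set X :=
  {x | ∀ y, I x + ((⟪β, H x⟫ + g (H x) : ℝ) : EReal) ≤
    I y + ((⟪β, H y⟫ + g (H y) : ℝ) : EReal)}

/-!
Write `c(w) = ⟪β, w⟫ + g(w)`. Since `s(v) - c(v)` is minus the infimum of `I + c ∘ H̃` over the
fibre `H̃ = v`, a point minimizes `I + c ∘ H̃` globally exactly when it minimizes `I` on its own
fibre and that fibre lies over a maximum `u` of `s - c`; maximality of `s - c` at `u` is the
supporting-hyperplane condition for `s - g` with normal `[β, -1]`.
-/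

lemma EReal.coe_le_add_coe_iff (a b : ℝ) (z : EReal) :
    (a : EReal) ≤ z + b ↔ ((a - b : ℝ) : EReal) ≤ z := by
  conv_rhs => rw [← (EReal.addLECancellable_coe b).add_le_add_iff_right]
  rw [← EReal.coe_add, _root_.sub_add_cancel]

section
variable {σ : ℕ} {X : Type*} {I : X → EReal} {H : X → EuclideanSpace ℝ (Fin σ)}
  {g : EuclideanSpace ℝ (Fin σ) → ℝ} {β u : EuclideanSpace ℝ (Fin σ)} {x : X}

lemma microEntropy_le_coe_iff {v : EuclideanSpace ℝ (Fin σ)} {a : ℝ} :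
    microEntropy I H v ≤ a ↔ ∀ y, H y = v → ((-a : ℝ) : EReal) ≤ I y := by
  simp [microEntropy, EReal.neg_le]

lemma microEntropy_eq_neg_of_mem_microEquilibrium (hx : x ∈ microEquilibrium I H u) :
    microEntropy I H u = -I x := by
  have hleast : IsLeast (I '' {y | H y = u}) (I x) :=
    ⟨⟨x, hx.1, rfl⟩, by rintro _ ⟨y, hy, rfl⟩; exact hx.2 y hy⟩
  rw [microEntropy, hleast.csInf_eq]

lemma mem_microEquilibrium_of_mem_genCanonEquilibrium (hx : x ∈ genCanonEquilibrium I H g β) :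
    x ∈ microEquilibrium I H (H x) :=
  ⟨rfl, fun y hy => (EReal.addLECancellable_coe _).add_le_add_iff_right.mp (hy ▸ hx y)⟩

lemma ne_top_of_mem_genCanonEquilibrium (hx : x ∈ genCanonEquilibrium I H g β) {y : X}
    (hy : I y ≠ ⊤) : I x ≠ ⊤ := by
  intro htop
  have := hx y
  rw [htop, EReal.top_add_coe, top_le_iff] at this
  exact EReal.add_ne_top hy (EReal.coe_ne_top _) this

lemma supportingHyperplane_iff_mem_genCanonEquilibrium (hx : x ∈ microEquilibrium I H u)
    (htop : I x ≠ ⊤) (hbot : I x ≠ ⊥) :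
    (∀ v, microEntropy I H v - ((g v : ℝ) : EReal) ≤
        microEntropy I H u - ((g u : ℝ) : EReal) + ((⟪β, v - u⟫ : ℝ) : EReal)) ↔
      x ∈ genCanonEquilibrium I H g β := by
  obtain ⟨r, hr⟩ : ∃ r : ℝ, I x = r := ⟨_, (EReal.coe_toReal htop hbot).symm⟩
  have hs := microEntropy_eq_neg_of_mem_microEquilibrium hx
  obtain ⟨rfl, -⟩ := hx
  have hv : ∀ v, microEntropy I H v - ((g v : ℝ) : EReal) ≤
        microEntropy I H (H x) - ((g (H x) : ℝ) : EReal) + ((⟪β, v - H x⟫ : ℝ) : EReal) ↔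
      ∀ y, H y = v →
        ((r + (⟪β, H x⟫ + g (H x)) : ℝ) : EReal) ≤ I y + ((⟪β, v⟫ + g v : ℝ) : EReal) := by
    intro v
    rw [hs, hr, ← EReal.coe_neg, ← EReal.coe_sub, ← EReal.coe_add,
      EReal.sub_le_iff_le_add (.inl (EReal.coe_ne_bot _)) (.inl (EReal.coe_ne_top _)),
      ← EReal.coe_add, microEntropy_le_coe_iff]
    refine forall₂_congr fun y _ => ?_
    rw [EReal.coe_le_add_coe_iff, inner_sub_right]
    ring_nf
  simp only [hv, genCanonEquilibrium, Set.mem_ofPred_eq, hr, ← EReal.coe_add]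
  exact ⟨fun h y => h (H y) y rfl, fun h _ y hy => hy ▸ h y⟩

end

theorem genCanon_union_over_support_points_general
    (σ : ℕ) (X : Type*)
    (I : X → EReal) (hIpos : ∀ x, 0 ≤ I x)
    (hI0 : ∃ x, I x = 0)
    (H : X → EuclideanSpace ℝ (Fin σ))
    (g : EuclideanSpace ℝ (Fin σ) → ℝ)
    (β : EuclideanSpace ℝ (Fin σ)) :
    genCanonEquilibrium I H g β =
      ⋃ u ∈ {u : EuclideanSpace ℝ (Fin σ) | microEntropy I H u ≠ ⊥ ∧
        ∀ v, microEntropy I H v - ((g v : ℝ) : EReal) ≤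
          microEntropy I H u - ((g u : ℝ) : EReal) + ((⟪β, v - u⟫ : ℝ) : EReal)},
        microEquilibrium I H u := by
  ext x
  simp only [Set.mem_iUnion, Set.mem_ofPred_eq, exists_prop]
  have hbot : I x ≠ ⊥ := (EReal.bot_lt_zero.trans_le (hIpos x)).ne'
  constructor
  · intro hx
    have hmicro := mem_microEquilibrium_of_mem_genCanonEquilibrium hx
    obtain ⟨y, hy⟩ := hI0
    have htop : I x ≠ ⊤ := ne_top_of_mem_genCanonEquilibrium hx (hy ▸ EReal.zero_ne_top)
    refine ⟨H x, ⟨?_, (supportingHyperplane_iff_mem_genCanonEquilibrium hmicro htop hbot).2 hx⟩,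
      hmicro⟩
    rwa [microEntropy_eq_neg_of_mem_microEquilibrium hmicro, ne_eq, EReal.neg_eq_bot_iff]
  · rintro ⟨u, ⟨hne, hsupp⟩, hx⟩
    have htop : I x ≠ ⊤ := by
      rwa [microEntropy_eq_neg_of_mem_microEquilibrium hx, ne_eq, EReal.neg_eq_bot_iff] at hne
    exact (supportingHyperplane_iff_mem_genCanonEquilibrium hx htop hbot).1 hsupp

/-- with `A(g)_β` the set of `u ∈ dom s` at which `s - g` has a
supporting hyperplane with normal vector `[β, -1]`, one has
`𝓔(g)_β = ⋃_{u ∈ A(g)_β} 𝓔^u`. -/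
theorem genCanon_union_over_support_points
    (σ : ℕ) (X : Type*) [MetricSpace X]
    (I : X → EReal) (hIpos : ∀ x, 0 ≤ I x) (hIlsc : LowerSemicontinuous I)
    (hIcpt : ∀ c : ℝ, IsCompact {x | I x ≤ ((c : ℝ) : EReal)})
    (hI0 : ∃ x, I x = 0)
    (H : X → EuclideanSpace ℝ (Fin σ)) (hH : Continuous H)
    (hHb : ∃ C : ℝ, ∀ x, ‖H x‖ ≤ C)
    (g : EuclideanSpace ℝ (Fin σ) → ℝ) (hg : Continuous g)
    (β : EuclideanSpace ℝ (Fin σ)) :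
    genCanonEquilibrium I H g β =
      ⋃ u ∈ {u : EuclideanSpace ℝ (Fin σ) | microEntropy I H u ≠ ⊥ ∧
        ∀ v, microEntropy I H v - ((g v : ℝ) : EReal) ≤
          microEntropy I H u - ((g u : ℝ) : EReal) + ((⟪β, v - u⟫ : ℝ) : EReal)},
        microEquilibrium I H u :=
  genCanon_union_over_support_points_general σ X I hIpos hI0 H g β
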